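/- arXiv:2402.04035 — 4 statements merged into one kernel-verified Lean document; each statement's English description precedes it below -/
import Mathlib

section
/- Standard farthest-first traversal (Gonzalez) gives a 2-approximation for k-center: if C_{k} is constructed by starting from an arbitrary point and repeatedly adding the point farthest from the current set of centers (k points in total), then max_{x∈X} d(x, C_k) ≤ 2 · φ_OPT. -/
/-- distance of a point to a finite set of centers -/
noncomputable def dSet {X : Type*} [MetricSpace X] (x : X) (C : Finset X) : ℝ :=
  sInf ((fun c => dist x c) '' (C : Set X))

/-- k-center cost of a set of centers -/
noncomputable def kCenterCost {X : Type*} [MetricSpace X] [Fintype X] [Nonempty X]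
    (C : Finset X) : ℝ :=
  Finset.univ.sup' Finset.univ_nonempty (fun x => dSet x C)

/-- optimal k-center cost -/
noncomputable def kCenterOpt (X : Type*) [MetricSpace X] [Fintype X] [Nonempty X]
    (k : ℕ) : ℝ :=
  sInf {r | ∃ C : Finset X, C.card = k ∧ r = kCenterCost C}

/-!
Let `r` be the cost of the greedy centers `C k`, and `w` a point realising it. If `r > 0`, each
point added by the traversal is at distance at least `r` from all earlier centers (the farthest
distance only decreases along the traversal), so `C k ∪ {w}` consists of `k + 1` points pairwise at
distance `≥ r`. Two of them share a nearest center `c` of an optimal solution, whence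
`r ≤ d(p, c) + d(c, q) ≤ 2 φ_OPT`.
-/

section Metric

variable {X : Type*} [MetricSpace X]

lemma dSet_eq_inf' (x : X) {C : Finset X} (hC : C.Nonempty) :
    dSet x C = C.inf' hC (dist x) := by
  rw [dSet, Finset.inf'_eq_csInf_image]

lemma dSet_le_dist (x : X) {C : Finset X} {c : X} (hc : c ∈ C) : dSet x C ≤ dist x c := by
  rw [dSet_eq_inf' x ⟨c, hc⟩]
  exact Finset.inf'_le _ hc

lemma exists_mem_dist_eq_dSet (x : X) {C : Finset X} (hC : C.Nonempty) :
    ∃ c ∈ C, dist x c = dSet x C := by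
  rw [dSet_eq_inf' x hC]
  exact (Finset.exists_mem_eq_inf' hC _).imp fun _ ⟨hc, h⟩ => ⟨hc, h.symm⟩

lemma dSet_nonneg (x : X) (C : Finset X) : 0 ≤ dSet x C :=
  Real.sInf_nonneg <| by rintro _ ⟨c, -, rfl⟩; exact dist_nonneg

lemma dSet_anti (x : X) {C D : Finset X} (hCD : C ⊆ D) (hC : C.Nonempty) :
    dSet x D ≤ dSet x C := by
  obtain ⟨c, hc, hxc⟩ := exists_mem_dist_eq_dSet x hC
  exact hxc ▸ dSet_le_dist x (hCD hc)

variable [Fintype X] [Nonempty X]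

lemma dSet_le_kCenterCost (x : X) (C : Finset X) : dSet x C ≤ kCenterCost C :=
  Finset.le_sup' (fun x => dSet x C) (Finset.mem_univ x)

lemma exists_dSet_eq_kCenterCost (C : Finset X) : ∃ w : X, dSet w C = kCenterCost C :=
  (Finset.exists_mem_eq_sup' Finset.univ_nonempty _).imp fun _ ⟨_, h⟩ => h.symm

lemma kCenterCost_nonneg (C : Finset X) : 0 ≤ kCenterCost C :=
  (dSet_nonneg (Classical.arbitrary X) C).trans (dSet_le_kCenterCost _ C)

lemma kCenterOpt_nonneg (k : ℕ) : 0 ≤ kCenterOpt X k :=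
  Real.sInf_nonneg <| by rintro _ ⟨C, -, rfl⟩; exact kCenterCost_nonneg C

lemma exists_card_eq_kCenterCost_eq_kCenterOpt {k : ℕ} (hkX : k ≤ Fintype.card X) :
    ∃ D : Finset X, D.card = k ∧ kCenterCost D = kCenterOpt X k := by
  have hne : {r | ∃ C : Finset X, C.card = k ∧ r = kCenterCost C}.Nonempty := by
    obtain ⟨D, -, hD⟩ := Finset.exists_subset_card_eq (s := Finset.univ) (n := k) hkX
    exact ⟨_, D, hD, rfl⟩
  have hfin : {r | ∃ C : Finset X, C.card = k ∧ r = kCenterCost C}.Finite :=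
    (Set.finite_range kCenterCost).subset fun _ ⟨D, _, hD⟩ => ⟨D, hD.symm⟩
  obtain ⟨D, hD, hopt⟩ := hne.csInf_mem hfin
  exact ⟨D, hD, hopt.symm⟩

lemma le_two_mul_kCenterCost_of_pairwise {D S : Finset X} {r : ℝ} (hD : D.Nonempty)
    (hcard : D.card < S.card) (hS : (S : Set X).Pairwise fun p q => r ≤ dist p q) :
    r ≤ 2 * kCenterCost D := by
  choose f hfD hf using fun x => exists_mem_dist_eq_dSet x hD
  obtain ⟨p, hp, q, hq, hpq, hfpq⟩ :=
    Finset.exists_ne_map_eq_of_card_lt_of_maps_to hcard fun x _ => hfD x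
  calc r ≤ dist p q := hS hp hq hpq
    _ ≤ dist p (f p) + dist q (f q) := by
      rw [hfpq, dist_comm q]; exact dist_triangle _ _ _
    _ ≤ kCenterCost D + kCenterCost D := by
      rw [hf, hf]; exact add_le_add (dSet_le_kCenterCost p D) (dSet_le_kCenterCost q D)
    _ = 2 * kCenterCost D := (two_mul _).symm

lemma kCenterCost_le_dist_of_farthest {C D : Finset X} {z a : X} (hCD : C ⊆ D)
    (hz : ∀ x, dSet x C ≤ dSet z C) (ha : a ∈ C) : kCenterCost D ≤ dist z a := by
  obtain ⟨w, hw⟩ := exists_dSet_eq_kCenterCost D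
  calc kCenterCost D = dSet w D := hw.symm
    _ ≤ dSet w C := dSet_anti w hCD ⟨a, ha⟩
    _ ≤ dSet z C := hz w
    _ ≤ dist z a := dSet_le_dist z ha

lemma notMem_of_farthest {C D : Finset X} {z : X} (hCD : C ⊆ D)
    (hz : ∀ x, dSet x C ≤ dSet z C) (hpos : 0 < kCenterCost D) : z ∉ C := fun hzC =>
  (kCenterCost_le_dist_of_farthest hCD hz hzC).not_gt (by rwa [dist_self])

lemma pairwise_insert_of_farthest [DecidableEq X] {C D : Finset X} {z : X} (hCD : C ⊆ D)
    (hz : ∀ x, dSet x C ≤ dSet z C)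
    (hC : (C : Set X).Pairwise fun p q => kCenterCost D ≤ dist p q) :
    ((insert z C : Finset X) : Set X).Pairwise fun p q => kCenterCost D ≤ dist p q := by
  rw [Finset.coe_insert, Set.pairwise_insert]
  refine ⟨hC, fun a ha _ => ⟨?_, ?_⟩⟩
  · exact kCenterCost_le_dist_of_farthest hCD hz ha
  · exact dist_comm z a ▸ kCenterCost_le_dist_of_farthest hCD hz ha

end Metric

section Greedy

variable {X : Type*} [MetricSpace X] [DecidableEq X] {k : ℕ} {x0 : X} {C : ℕ → Finset X}

lemma greedy_monotoneOn
    (hstep : ∀ i, 1 ≤ i → i < k → ∃ z : X,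
      (∀ x : X, dSet x (C i) ≤ dSet z (C i)) ∧ C (i + 1) = insert z (C i)) :
    MonotoneOn C (Set.Icc 1 k) :=
  monotoneOn_of_le_succ Set.ordConnected_Icc fun i _ hi hi1 => by
    rw [Order.succ_eq_add_one] at hi1 ⊢
    obtain ⟨z, -, hz⟩ := hstep i hi.1 (by grind)
    exact hz ▸ Finset.subset_insert z _

variable [Fintype X] [Nonempty X]

lemma greedy_card_eq_and_pairwise (hC1 : C 1 = {x0})
    (hstep : ∀ i, 1 ≤ i → i < k → ∃ z : X,
      (∀ x : X, dSet x (C i) ≤ dSet z (C i)) ∧ C (i + 1) = insert z (C i))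
    (hpos : 0 < kCenterCost (C k)) {j : ℕ} (hj : 1 ≤ j) (hjk : j ≤ k) :
    (C j).card = j ∧ (C j : Set X).Pairwise fun p q => kCenterCost (C k) ≤ dist p q := by
  induction j, hj using Nat.le_induction with
  | base => simp [hC1]
  | succ j hj ih =>
    obtain ⟨hcard, hsep⟩ := ih (by omega)
    obtain ⟨z, hz, hCz⟩ := hstep j hj (by omega)
    have hCk : C j ⊆ C k := greedy_monotoneOn hstep ⟨hj, by omega⟩ ⟨by omega, le_rfl⟩ (by omega)
    rw [hCz, Finset.card_insert_of_notMem (notMem_of_farthest hCk hz hpos), hcard]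
    exact ⟨rfl, pairwise_insert_of_farthest hCk hz hsep⟩

end Greedy

/-- Gonzalez' farthest-first traversal gives a 2-approximation for `k`-center:
start from an arbitrary point `x0`, and at each step add a point farthest from
the current set of centers; after `k` points, the cost is at most `2 · φ_OPT`. -/
theorem stmt_2 {X : Type*} [MetricSpace X] [Fintype X] [Nonempty X] [DecidableEq X]
    (k : ℕ) (hk : 1 ≤ k) (hkX : k ≤ Fintype.card X)
    (x0 : X) (C : ℕ → Finset X) (hC1 : C 1 = {x0})
    (hstep : ∀ i, 1 ≤ i → i < k → ∃ z : X,
      (∀ x : X, dSet x (C i) ≤ dSet z (C i)) ∧ C (i + 1) = insert z (C i)) :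
    kCenterCost (C k) ≤ 2 * kCenterOpt X k := by
  rcases (kCenterCost_nonneg (C k)).eq_or_lt with hzero | hpos
  · rw [← hzero]
    exact mul_nonneg zero_le_two (kCenterOpt_nonneg k)
  obtain ⟨D, hDcard, hDopt⟩ := exists_card_eq_kCenterCost_eq_kCenterOpt hkX
  obtain ⟨w, hw⟩ := exists_dSet_eq_kCenterCost (C k)
  have hfarthest : ∀ x, dSet x (C k) ≤ dSet w (C k) := fun x => hw ▸ dSet_le_kCenterCost x _
  obtain ⟨hcard, hsep⟩ := greedy_card_eq_and_pairwise hC1 hstep hpos hk le_rfl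
  rw [← hDopt]
  refine le_two_mul_kCenterCost_of_pairwise (S := insert w (C k)) (Finset.card_pos.mp (by omega))
    ?_ (pairwise_insert_of_farthest subset_rfl hfarthest hsep)
  rw [Finset.card_insert_of_notMem (notMem_of_farthest subset_rfl hfarthest hpos)]
  omega
end

section
/- Pigeonhole for hitting optimal clusters: let C* = {A_1,...,A_k} be the optimal k-center clustering partition of X, and let C ⊆ X be any set of points. If C fails to intersect some cluster A_j, and C was built by farthest-first traversal, then at the first iteration i where a cluster receives a second point x_2 (with x_1 the first point of that cluster in C), every point u ∈ X satisfies d(u, C_i) ≤ d(x_2, x_1) ≤ 2·φ_OPT. -/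
/-- Pigeonhole for hitting optimal clusters: let `Cstar` be an optimal
`k`-center solution of cost `φ_OPT = kCenterCost Cstar`, and suppose during
farthest-first traversal a cluster of `Cstar` (with nearest center `ℓ`)
receives a second point: `x1 ∈ C i` and the newly added `x2` (which maximizes
`dSet · (C i)`) both lie within `φ_OPT` of `ℓ`. Then every point `u` satisfies
`d(u, C i) ≤ d(x2, x1) ≤ 2 · φ_OPT`. -/
theorem stmt_3 {X : Type*} [MetricSpace X] [Fintype X] [Nonempty X]
    (k : ℕ) (Cstar : Finset X) (hCk : Cstar.card = k)
    (hopt : kCenterCost Cstar = kCenterOpt X k)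
    (Ci : Finset X) (x1 x2 ℓ : X) (hℓ : ℓ ∈ Cstar)
    (hx1 : x1 ∈ Ci)
    (h1 : dist x1 ℓ ≤ kCenterCost Cstar) (h2 : dist x2 ℓ ≤ kCenterCost Cstar)
    (hmax : ∀ x : X, dSet x Ci ≤ dSet x2 Ci) :
    (∀ u : X, dSet u Ci ≤ dist x2 x1) ∧ dist x2 x1 ≤ 2 * kCenterCost Cstar := by
  have hle : dSet x2 Ci ≤ dist x2 x1 := by
    apply csInf_le
    · exact ⟨0, fun r ⟨c, _, hr⟩ => hr ▸ dist_nonneg⟩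
    · exact ⟨x1, by simpa using hx1, rfl⟩
  refine ⟨fun u => le_trans (le_trans (hmax u) hle) le_rfl, ?_⟩
  calc dist x2 x1 ≤ dist x2 ℓ + dist ℓ x1 := dist_triangle _ _ _
    _ ≤ kCenterCost Cstar + kCenterCost Cstar := by
        rw [dist_comm ℓ x1]; exact add_le_add h2 h1
    _ = 2 * kCenterCost Cstar := by ring
end

section
/- Expected cost decrease per round: suppose the current centers C_t satisfy φ_{C_t}(X) ≥ 20·φ_OPT for k-median, partition the uncovered clusters into heavy ones (cost ≥ φ_{C_t}(U)/(2k)) and light ones, and assume each heavy cluster becomes covered with probability at least 1 − exp(−T/(40k)). Then the expected uncovered cost after the round satisfies E[φ_{C_{t+1}}(U)] ≤ ((1 + exp(−T/(40k)))/2)·φ_{C_t}(U). -/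
open Classical

/-- Expected cost decrease per round: partition the uncovered optimal clusters
(indices `U`, with uncovered costs `a i`, total `u = ∑_{i∈U} a i`) into heavy
ones (cost `≥ u/(2k)`) and light ones. If each heavy uncovered cluster becomes
covered with probability at least `1 − exp(−T/(40k))`, and the uncovered cost
after the round is at most the sum of `a i` over uncovered clusters that remain
uncovered, then the expected uncovered cost after the round is at most
`((1 + exp(−T/(40k)))/2)·u`. -/
theorem stmt_15 {Ω : Type*} [Fintype Ω]
    (p : Ω → ℝ) (hp0 : ∀ ω, 0 ≤ p ω) (hp1 : ∑ ω, p ω = 1)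
    (k : ℕ) (hk : 1 ≤ k) (T : ℝ) (hT : 0 ≤ T)
    (a : Fin k → ℝ) (ha : ∀ i, 0 ≤ a i)
    (U : Finset (Fin k))
    (cov : Fin k → Ω → Prop)
    (newCost : Ω → ℝ)
    (hnew : ∀ ω, newCost ω ≤ ∑ i ∈ U.filter (fun i => ¬ cov i ω), a i)
    (hheavy : ∀ i ∈ U, (∑ j ∈ U, a j) / (2 * k) ≤ a i →
      1 - Real.exp (-(T / (40 * k))) ≤ ∑ ω ∈ Finset.univ.filter (fun ω => cov i ω), p ω) :
    ∑ ω, p ω * newCost ω ≤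
      ((1 + Real.exp (-(T / (40 * k)))) / 2) * ∑ j ∈ U, a j := by
  classical
  set u := ∑ j ∈ U, a j with hu
  set ε := Real.exp (-(T / (40 * k))) with hε
  have hk0 : (0:ℝ) < k := by exact_mod_cast hk
  have hε0 : 0 < ε := Real.exp_pos _
  have hε1 : ε ≤ 1 := by
    rw [hε]
    calc Real.exp (-(T / (40 * ↑k))) ≤ Real.exp 0 := by
          apply Real.exp_le_exp.mpr
          have : 0 ≤ T / (40 * (k:ℝ)) := by positivity
          linarith
    _ = 1 := Real.exp_zero
  have hu0 : 0 ≤ u := Finset.sum_nonneg (fun i _ => ha i)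
  -- q i := prob i uncovered
  set q : Fin k → ℝ := fun i => ∑ ω ∈ Finset.univ.filter (fun ω => ¬ cov i ω), p ω with hq
  have hq1 : ∀ i, q i ≤ 1 := by
    intro i
    rw [hq, ← hp1]
    exact Finset.sum_le_sum_of_subset_of_nonneg (Finset.filter_subset _ _)
      (fun ω _ _ => hp0 ω)
  have hq0 : ∀ i, 0 ≤ q i := fun i => Finset.sum_nonneg (fun ω _ => hp0 ω)
  have hqheavy : ∀ i ∈ U, u / (2 * k) ≤ a i → q i ≤ ε := by
    intro i hi hia
    have h1 := hheavy i hi hia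
    have h2 : (∑ ω ∈ Finset.univ.filter (fun ω => cov i ω), p ω)
        + (∑ ω ∈ Finset.univ.filter (fun ω => ¬ cov i ω), p ω) = 1 := by
      rw [Finset.sum_filter_add_sum_filter_not, hp1]
    rw [hq]
    linarith
  -- key rewriting
  have key : (∑ ω, p ω * ∑ i ∈ U.filter (fun i => ¬ cov i ω), a i)
      = ∑ i ∈ U, a i * q i := by
    simp_rw [Finset.sum_filter, Finset.mul_sum, mul_ite, mul_zero]
    rw [Finset.sum_comm]
    refine Finset.sum_congr rfl (fun i _ => ?_)
    rw [hq, ← Finset.sum_filter, Finset.mul_sum]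
    exact Finset.sum_congr rfl (fun ω _ => mul_comm _ _)
  have step1 : ∑ ω, p ω * newCost ω ≤ ∑ i ∈ U, a i * q i := by
    rw [← key]
    exact Finset.sum_le_sum (fun ω _ => mul_le_mul_of_nonneg_left (hnew ω) (hp0 ω))
  -- split heavy/light
  have split : ∑ i ∈ U, a i * q i
      = (∑ i ∈ U.filter (fun i => u / (2 * k) ≤ a i), a i * q i)
      + (∑ i ∈ U.filter (fun i => ¬ u / (2 * k) ≤ a i), a i * q i) :=
    (Finset.sum_filter_add_sum_filter_not U _ _).symm
  set H := U.filter (fun i => u / (2 * k) ≤ a i) with hH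
  set L := U.filter (fun i => ¬ u / (2 * k) ≤ a i) with hL
  have hHbound : ∑ i ∈ H, a i * q i ≤ ε * ∑ i ∈ H, a i := by
    rw [Finset.mul_sum]
    refine Finset.sum_le_sum (fun i hi => ?_)
    rw [hH, Finset.mem_filter] at hi
    calc a i * q i ≤ a i * ε := mul_le_mul_of_nonneg_left (hqheavy i hi.1 hi.2) (ha i)
    _ = ε * a i := mul_comm _ _
  have hLbound : ∑ i ∈ L, a i * q i ≤ ∑ i ∈ L, a i := by
    refine Finset.sum_le_sum (fun i _ => ?_)
    calc a i * q i ≤ a i * 1 := mul_le_mul_of_nonneg_left (hq1 i) (ha i)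
    _ = a i := mul_one _
  have hLsum : ∑ i ∈ L, a i ≤ u / 2 := by
    have h1 : ∑ i ∈ L, a i ≤ ∑ i ∈ L, u / (2 * k) := by
      refine Finset.sum_le_sum (fun i hi => ?_)
      rw [hL, Finset.mem_filter] at hi
      have := hi.2
      push_neg at this
      exact le_of_lt this
    have h2 : (L.card : ℝ) ≤ k := by
      have := Finset.card_le_univ L
      calc (L.card : ℝ) ≤ ((Finset.univ : Finset (Fin k)).card : ℝ) := by exact_mod_cast this
      _ = k := by simp
    rw [Finset.sum_const, nsmul_eq_mul] at h1
    have h4 : (L.card : ℝ) * (u / (2 * k)) ≤ k * (u / (2 * k)) := by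
      apply mul_le_mul_of_nonneg_right h2 (by positivity)
    have h5 : (k : ℝ) * (u / (2 * k)) = u / 2 := by
      field_simp
    linarith
  have hHsum : ∑ i ∈ H, a i ≤ u := by
    rw [hu]
    exact Finset.sum_le_sum_of_subset_of_nonneg (Finset.filter_subset _ _)
      (fun i _ _ => ha i)
  have hHLsum : (∑ i ∈ H, a i) + (∑ i ∈ L, a i) = u :=
    Finset.sum_filter_add_sum_filter_not U _ _
  have hHnn : 0 ≤ ∑ i ∈ H, a i := Finset.sum_nonneg (fun i _ => ha i)
  -- combine: ε H + u/2 vs target (1+ε)/2 u; εH + L·1 form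
  have hcomb : ∑ i ∈ U, a i * q i ≤ ε * (∑ i ∈ H, a i) + ∑ i ∈ L, a i := by
    rw [split]; exact add_le_add hHbound hLbound
  have final : ε * (∑ i ∈ H, a i) + ∑ i ∈ L, a i ≤ ((1 + ε) / 2) * u := by
    nlinarith [hHLsum, hLsum, hε1, hε0.le]
  linarith
end

section
/- Half-approximate selection from the query set: in the 2k-query k-center algorithm, if the new center z (chosen to maximize the queried distance d(y,z) over y ∈ Q_i) belongs to cluster S_{y,i}, then for every center u ∈ C_i and every point w ∈ S_{u,i}, d(y,z) ≥ (1/2)·d(u,w). That is, the algorithm executes a 1/2-approximate farthest-first traversal. -/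
/-- Half-approximate selection from the query set: let `C` be the current
centers and `Q ⊆ C` the query set, with `far u` the farthest point of the
cluster of `u` (the cluster of `u` consists of the points `x` with
`dist x u ≤ dist x c` for all `c ∈ C`). Suppose the pair `(y, far y)` with
`y ∈ Q` maximizes the queried distance `dist p (far p)` over `p ∈ Q`, and each
center `u ∉ Q` was excluded because some `p ∈ Q` satisfies
`dist (far u) (far p) ≤ dist p (far p)`. Then for every center `u ∈ C` and
every point `x` of `u`'s cluster, `dist u x ≤ 2 · dist y (far y)`; i.e., the
algorithm performs a `1/2`-approximate farthest-first traversal. -/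
theorem stmt_18 {X : Type*} [MetricSpace X] [Fintype X]
    (C Q : Finset X) (hQC : Q ⊆ C)
    (far : X → X)
    (hfar : ∀ u ∈ C, (∀ c ∈ C, dist (far u) u ≤ dist (far u) c) ∧
      ∀ x : X, (∀ c ∈ C, dist x u ≤ dist x c) → dist u x ≤ dist u (far u))
    (y : X) (hyQ : y ∈ Q)
    (hsel : ∀ p ∈ Q, dist p (far p) ≤ dist y (far y))
    (hexcl : ∀ u ∈ C, u ∉ Q → ∃ p ∈ Q, dist (far u) (far p) ≤ dist p (far p)) :
    ∀ u ∈ C, ∀ x : X, (∀ c ∈ C, dist x u ≤ dist x c) →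
      dist u x ≤ 2 * dist y (far y) := by
  intro u huC x hx
  have h1 : dist u x ≤ dist u (far u) := (hfar u huC).2 x hx
  by_cases huQ : u ∈ Q
  · have := hsel u huQ
    have hd0 : 0 ≤ dist y (far y) := dist_nonneg
    linarith
  · obtain ⟨p, hpQ, hp⟩ := hexcl u huC huQ
    have hpC : p ∈ C := hQC hpQ
    have h2 : dist (far u) u ≤ dist (far u) p := (hfar u huC).1 p hpC
    have h3 : dist (far u) p ≤ dist (far u) (far p) + dist (far p) p :=
      dist_triangle _ _ _
    have h4 : dist p (far p) ≤ dist y (far y) := hsel p hpQ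
    have e1 : dist u (far u) = dist (far u) u := dist_comm _ _
    have e2 : dist (far p) p = dist p (far p) := dist_comm _ _
    linarith
end
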